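/- Let f = v^d be the d-th power of a nonzero linear form v over a field k. Then r^G_k(f) = 1: the infimum of d·val_t(det g(t))/val_t(g(t)·v^d) over g(t) ∈ GL_n(k[[t]]) with val_t(g(t)·v^d) > 0 equals 1, attained by g(t) = diag(t,1,...,1) in a basis with first coordinate dual to v. -/

import Mathlib

/-- The Gauss `t`-adic valuation of a polynomial with coefficients in `k[[t]]`:
the minimum of the `t`-adic valuations of its coefficients. -/
noncomputable def tval {k : Type*} [Field k] {n : ℕ}
    (F : MvPolynomial (Fin n) (PowerSeries k)) : ℕ :=
  sInf {m : ℕ | ∃ d, PowerSeries.coeff m (MvPolynomial.coeff d F) ≠ 0}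

/-- The `t`-adic valuation of a power series. -/
noncomputable def psval {k : Type*} [Field k] (p : PowerSeries k) : ℕ :=
  sInf {m : ℕ | PowerSeries.coeff m p ≠ 0}

/-- The action of a matrix `g` over `k[[t]]` on polynomials by linear substitution
of the variables. -/
noncomputable def matAct {k : Type*} [Field k] {n : ℕ}
    (g : Matrix (Fin n) (Fin n) (PowerSeries k))
    (F : MvPolynomial (Fin n) (PowerSeries k)) : MvPolynomial (Fin n) (PowerSeries k) :=
  MvPolynomial.aeval (fun i => ∑ j, MvPolynomial.C (g i j) * MvPolynomial.X j) F

/-- The `G`-rank (`G = GLₙ`) of a (degree `d`) polynomial `F` over `k[[t]]`: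
the infimum of `d · val_t(det g) / val_t(g·F)` over matrices `g` over `k[[t]]` with
nonzero determinant such that `val_t(g·F) > 0`. -/
noncomputable def GRank {k : Type*} [Field k] {n : ℕ} (d : ℕ)
    (F : MvPolynomial (Fin n) (PowerSeries k)) : ℝ :=
  sInf {x : ℝ | ∃ g : Matrix (Fin n) (Fin n) (PowerSeries k),
    g.det ≠ 0 ∧ 0 < tval (matAct g F) ∧
    x = (d : ℝ) * (psval g.det : ℝ) / (tval (matAct g F) : ℝ)}

/-!
The diagonal matrix `diag(t, 1, …, 1)` sends `x₁^d` to `t^d x₁^d`, which realises the ratio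
`d · 1 / d = 1`. Conversely, let `t^v` be the exact power of `t` dividing the first row
`(g₁ⱼ)` of `g`, attained at `j₀`. Then `t^v ∣ det g`, while `g · x₁^d = (∑ⱼ g₁ⱼ xⱼ)^d` evaluates
at the basis vector `e_{j₀}` to `g₁ⱼ₀^d`, of valuation `d v`. Since `t^(val_t F)` divides every
coefficient of `F`, it divides every value of `F`, so `val_t(g · x₁^d) ≤ d v ≤ d · val_t(det g)`.
-/

section PowerSeriesValuation

open PowerSeries

variable {k : Type*} [Field k]

lemma order_eq_psval {p : PowerSeries k} (hp : p ≠ 0) : p.order = psval p := by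
  have hne : {m : ℕ | coeff m p ≠ 0}.Nonempty := by
    by_contra h
    exact hp (ext fun m => by simpa using fun hm => h ⟨m, hm⟩)
  exact order_eq_nat.2 ⟨Nat.sInf_mem hne, fun i hi => by
    simpa using Nat.notMem_of_lt_sInf hi⟩

lemma psval_eq_toNat_order (p : PowerSeries k) : psval p = p.order.toNat := by
  rcases eq_or_ne p 0 with rfl | hp
  · simp [psval]
  · simp [order_eq_psval hp]

lemma psval_X_pow (N : ℕ) : psval ((X : PowerSeries k) ^ N) = N := by
  simp [psval_eq_toNat_order, order_X_pow]

lemma psval_pow (p : PowerSeries k) (d : ℕ) : psval (p ^ d) = d * psval p := by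
  simp [psval_eq_toNat_order, order_pow]

lemma le_psval_of_X_pow_dvd {p : PowerSeries k} {v : ℕ} (hp : p ≠ 0) (h : X ^ v ∣ p) :
    v ≤ psval p := by
  have := nat_le_order p v (X_pow_dvd_iff.1 h)
  rwa [order_eq_psval hp, Nat.cast_le] at this

end PowerSeriesValuation

section GaussValuation

open MvPolynomial

variable {k : Type*} [Field k] {n : ℕ}

lemma X_pow_tval_dvd_coeff (P : MvPolynomial (Fin n) (PowerSeries k)) (s : Fin n →₀ ℕ) :
    PowerSeries.X ^ tval P ∣ coeff s P :=
  PowerSeries.X_pow_dvd_iff.2 fun _ hi => by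
    simpa using fun h => Nat.notMem_of_lt_sInf hi ⟨s, h⟩

lemma X_pow_tval_dvd_eval (P : MvPolynomial (Fin n) (PowerSeries k))
    (x : Fin n → PowerSeries k) : PowerSeries.X ^ tval P ∣ eval x P := by
  rw [eval_eq]
  exact Finset.dvd_sum fun s _ => dvd_mul_of_dvd_left (X_pow_tval_dvd_coeff P s) _

lemma tval_le_psval_eval (P : MvPolynomial (Fin n) (PowerSeries k))
    (x : Fin n → PowerSeries k) (h : eval x P ≠ 0) : tval P ≤ psval (eval x P) :=
  le_psval_of_X_pow_dvd h (X_pow_tval_dvd_eval P x)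

lemma tval_monomial (s : Fin n →₀ ℕ) (c : PowerSeries k) :
    tval (monomial s c) = psval c := by
  classical
  unfold tval psval
  congr 1
  ext m
  simp only [coeff_monomial, Set.mem_ofPred_eq]
  constructor
  · rintro ⟨s', hs'⟩
    split_ifs at hs' <;> simp_all
  · exact fun h => ⟨s, by simpa using h⟩

end GaussValuation

lemma Matrix.dvd_det_of_forall_dvd_row {ι R : Type*} [Fintype ι] [DecidableEq ι] [CommRing R]
    (A : Matrix ι ι R) (i : ι) {c : R} (h : ∀ j, c ∣ A i j) : c ∣ A.det := by
  rw [det_eq_sum_mul_adjugate_row A i]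
  exact Finset.dvd_sum fun j _ => dvd_mul_of_dvd_left (h j) _

section LinearSubstitution

open MvPolynomial

variable {k : Type*} [Field k] {n : ℕ}

lemma matAct_map_X_pow (g : Matrix (Fin n) (Fin n) (PowerSeries k)) (i : Fin n) (d : ℕ) :
    matAct g (map PowerSeries.C (X i ^ d)) = (∑ j, C (g i j) * X j) ^ d := by
  simp [matAct]

lemma matAct_diagonal_map_X_pow (w : Fin n → PowerSeries k) (i : Fin n) (d : ℕ) :
    matAct (Matrix.diagonal w) (map PowerSeries.C (X i ^ d)) =
      monomial (Finsupp.single i d) (w i ^ d) := by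
  rw [matAct_map_X_pow, ← C_mul_X_pow_eq_monomial, map_pow, ← mul_pow]
  congr 1
  simp [Matrix.diagonal_apply, apply_ite C, ite_mul]

lemma tval_matAct_map_X_pow_le (g : Matrix (Fin n) (Fin n) (PowerSeries k)) (hg : g.det ≠ 0)
    (i : Fin n) (d : ℕ) : tval (matAct g (map PowerSeries.C (X i ^ d))) ≤ d * psval g.det := by
  classical
  obtain ⟨j₀, -, hmin⟩ :=
    Finset.univ.exists_min_image (fun j => (g i j).order) ⟨i, Finset.mem_univ i⟩
  have hj₀ : g i j₀ ≠ 0 := by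
    refine fun h0 => hg (Matrix.det_eq_zero_of_row_eq_zero i fun j => ?_)
    simpa [h0] using hmin j (Finset.mem_univ j)
  have hrow : ∀ j, PowerSeries.X ^ psval (g i j₀) ∣ g i j := fun j =>
    PowerSeries.X_pow_dvd_iff.2 fun m hm => PowerSeries.coeff_of_lt_order m <|
      (order_eq_psval hj₀ ▸ Nat.cast_lt.2 hm).trans_le (hmin j (Finset.mem_univ j))
  have heval : eval (Pi.single j₀ 1) (matAct g (map PowerSeries.C (X i ^ d))) = g i j₀ ^ d := by
    rw [matAct_map_X_pow]
    simp [Pi.single_apply]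
  calc tval (matAct g (map PowerSeries.C (X i ^ d)))
      ≤ psval (g i j₀ ^ d) := heval ▸ tval_le_psval_eval _ _ (heval ▸ pow_ne_zero d hj₀)
    _ = d * psval (g i j₀) := psval_pow _ _
    _ ≤ d * psval g.det :=
      Nat.mul_le_mul_left d (le_psval_of_X_pow_dvd hg (g.dvd_det_of_forall_dvd_row i hrow))

end LinearSubstitution

/-- the `G`-rank of the `d`-th power of a nonzero linear form equals `1`
(in a basis whose first coordinate is dual to `v`, so `f = x₁^d`). -/
theorem stmt15 {k : Type*} [Field k] {n d : ℕ} (hn : 0 < n) (hd : 1 ≤ d) :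
    GRank d (MvPolynomial.map (PowerSeries.C (R := k))
      ((MvPolynomial.X ⟨0, hn⟩ : MvPolynomial (Fin n) k) ^ d)) = 1 := by
  set i : Fin n := ⟨0, hn⟩
  set g := Matrix.diagonal (Function.update 1 i (PowerSeries.X : PowerSeries k))
  have hdet : g.det = PowerSeries.X := by
    simp [g, Matrix.det_diagonal, Finset.prod_update_of_mem]
  have htval : tval (matAct g (MvPolynomial.map PowerSeries.C (MvPolynomial.X i ^ d))) = d := by
    rw [matAct_diagonal_map_X_pow, tval_monomial, Function.update_self, psval_X_pow]
  refine IsLeast.csInf_eq ⟨⟨g, ?_, ?_, ?_⟩, ?_⟩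
  · exact hdet ▸ PowerSeries.X_ne_zero
  · rw [htval]; omega
  · rw [hdet, htval, ← pow_one PowerSeries.X, psval_X_pow]
    simp [Nat.one_le_iff_ne_zero.1 hd]
  · rintro x ⟨g', hg', hpos, rfl⟩
    rw [le_div_iff₀ (by exact_mod_cast hpos), one_mul]
    exact_mod_cast tval_matAct_map_X_pow_le g' hg' i d
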